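/- arXiv:2604.18419 — 2 statements merged into one kernel-verified Lean document; each statement's English description precedes it below -/
import Mathlib

section
/- In the same setting, V(s; a(π)) > V(s; π) holds at a non-terminal state s if and only if there exists a state s' reachable from s under π with V(s'; π) < r⊥. -/
open Finset

attribute [local instance] Classical.propDecidable

variable {V : Type*}

/-- Expected terminal reward (value function) of policy `π` from state `s`
with `n` generation steps remaining; `e` is the end-of-sequence token and
`r` the terminal reward, collected only when `e` is emitted.  States already
containing `e` are terminal and have value `0`. -/
noncomputable def Vval [Fintype V] (e : V) (r : List V → ℝ)
    (π : List V → V → ℝ) : ℕ → List V → ℝ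
  | 0, _ => 0
  | n+1, s =>
      if e ∈ s then 0 else
      ∑ a : V, π s a * (if a = e then r (s ++ [a]) else Vval e r π n (s ++ [a]))

/-- Value of the dynamic value-thresholding policy `a(π)`: at any
non-terminal state whose value under `π` is below the abstention reward
`rb` it abstains and receives `rb`; otherwise it follows `π`. -/
noncomputable def Aval [Fintype V] (e : V) (r : List V → ℝ)
    (π : List V → V → ℝ) (rb : ℝ) : ℕ → List V → ℝ
  | 0, _ => 0
  | n+1, s =>
      if e ∈ s then 0 else
      if Vval e r π (n+1) s < rb then rb else
      ∑ a : V, π s a * (if a = e then r (s ++ [a]) else Aval e r π rb n (s ++ [a]))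

/-- One generation step with positive probability from a non-terminal state. -/
def Step (e : V) (π : List V → V → ℝ) (s s' : List V) : Prop :=
  e ∉ s ∧ ∃ a : V, 0 < π s a ∧ s' = s ++ [a]

/-- `s'` is reachable from `s` with positive probability under `π`. -/
def Reach (e : V) (π : List V → V → ℝ) : List V → List V → Prop :=
  Relation.ReflTransGen (Step e π)

lemma reach_length_le (e : V) (π : List V → V → ℝ) {s s' : List V}
    (h : Reach e π s s') : s.length ≤ s'.length := by
  induction h with
  | refl => exact le_refl _
  | tail _ hst ih =>
    obtain ⟨_, a, _, rfl⟩ := hst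
    simp only [List.length_append, List.length_cons, List.length_nil]
    omega

lemma vval_le_aval [Fintype V] (e : V) (r : List V → ℝ) (π : List V → V → ℝ) (rb : ℝ)
    (hπ0 : ∀ s a, 0 ≤ π s a) :
    ∀ n s, Vval e r π n s ≤ Aval e r π rb n s := by
  intro n
  induction n with
  | zero => intro s; simp [Vval, Aval]
  | succ n ih =>
    intro s
    by_cases hs : e ∈ s
    · simp [Vval, Aval, hs]
    · rw [Aval, if_neg hs]
      by_cases hv : Vval e r π (n+1) s < rb
      · rw [if_pos hv]; exact le_of_lt hv
      · rw [if_neg hv, Vval, if_neg hs]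
        apply Finset.sum_le_sum
        intro a _
        by_cases hae : a = e
        · simp [hae]
        · simp only [if_neg hae]
          exact mul_le_mul_of_nonneg_left (ih _) (hπ0 s a)

lemma aval_eq_vval [Fintype V] (e : V) (r : List V → ℝ) (π : List V → V → ℝ) (rb : ℝ)
    (hπ0 : ∀ s a, 0 ≤ π s a) :
    ∀ n s, (∀ s', Reach e π s s' → e ∉ s' → s'.length < s.length + n →
      rb ≤ Vval e r π (s.length + n - s'.length) s') →
    Aval e r π rb n s = Vval e r π n s := by
  intro n
  induction n with
  | zero => intro s _; simp [Vval, Aval]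
  | succ n ih =>
    intro s h
    by_cases hs : e ∈ s
    · simp [Aval, Vval, hs]
    · have hself := h s Relation.ReflTransGen.refl hs (by omega)
      have harith : s.length + (n+1) - s.length = n + 1 := by omega
      rw [harith] at hself
      rw [Vval, if_neg hs] at hself
      rw [Aval, Vval, if_neg hs, if_neg hs, if_neg (not_lt.mpr hself)]
      apply Finset.sum_congr rfl
      intro a _
      by_cases hpa : 0 < π s a
      · by_cases hae : a = e
        · simp [hae]
        · rw [if_neg hae, if_neg hae]
          congr 1
          apply ih
          intro s' hr hs' hl
          have hstep : Step e π s (s ++ [a]) := ⟨hs, a, hpa, rfl⟩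
          have hlen2 : (s ++ [a]).length + n = s.length + (n+1) := by
            simp only [List.length_append, List.length_cons, List.length_nil]; omega
          have hl' : s'.length < s.length + (n+1) := by omega
          have := h s' (Relation.ReflTransGen.head hstep hr) hs' hl'
          rwa [hlen2]
      · have hz : π s a = 0 := le_antisymm (not_lt.mp hpa) (hπ0 s a)
        simp [hz]

lemma strict_aux [Fintype V] (e : V) (r : List V → ℝ) (π : List V → V → ℝ) (rb : ℝ)
    (hπ0 : ∀ s a, 0 ≤ π s a) :
    ∀ n s, e ∉ s →
      (∃ s', Reach e π s s' ∧ e ∉ s' ∧ s'.length < s.length + n ∧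
        Vval e r π (s.length + n - s'.length) s' < rb) →
      Vval e r π n s < Aval e r π rb n s := by
  intro n
  induction n with
  | zero =>
    rintro s hs ⟨s', hr, _, hl, _⟩
    have := reach_length_le e π hr
    omega
  | succ n ih =>
    rintro s hs ⟨s', hr, hs', hl, hv⟩
    by_cases hlow : Vval e r π (n+1) s < rb
    · rw [Aval, if_neg hs, if_pos hlow]; exact hlow
    · rcases hr.cases_head with rfl | ⟨b, hstep, hr'⟩
      · exfalso
        apply hlow
        have harith : s.length + (n+1) - s.length = n + 1 := by omega
        rwa [harith] at hv
      · obtain ⟨_, a0, hpa0, rfl⟩ := hstep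
        have hae : a0 ≠ e := by
          rintro rfl
          have hm : a0 ∈ s ++ [a0] := by simp
          rcases hr'.cases_head with rfl | ⟨c, hst2, _⟩
          · exact hs' hm
          · exact hst2.1 hm
        have hb : e ∉ s ++ [a0] := by
          simp only [List.mem_append, List.mem_singleton]
          rintro (h1 | h2)
          · exact hs h1
          · exact hae h2.symm
        have hlenb : (s ++ [a0]).length = s.length + 1 := by simp
        have hlt : Vval e r π n (s ++ [a0]) < Aval e r π rb n (s ++ [a0]) := by
          apply ih _ hb
          refine ⟨s', hr', hs', by rw [hlenb]; omega, ?_⟩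
          have harith : (s ++ [a0]).length + n - s'.length
              = s.length + (n+1) - s'.length := by rw [hlenb]; omega
          rwa [harith]
        rw [Vval, Aval, if_neg hs, if_neg hs, if_neg hlow]
        apply Finset.sum_lt_sum
        · intro a _
          by_cases hae' : a = e
          · simp [hae']
          · simp only [if_neg hae']
            exact mul_le_mul_of_nonneg_left (vval_le_aval e r π rb hπ0 _ _) (hπ0 s a)
        · refine ⟨a0, Finset.mem_univ a0, ?_⟩
          simp only [if_neg hae]
          exact mul_lt_mul_of_pos_left hlt hpa0

/-- Strictness part of the value dominance lemma: the value of `a(π)`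
strictly exceeds that of `π` at a non-terminal state `s` iff some
non-terminal state reachable from `s` under `π` has value below `r⊥`. -/
theorem value_dominance_strict_iff [Fintype V] (e : V) (r : List V → ℝ)
    (π : List V → V → ℝ) (rb : ℝ) (T : ℕ)
    (hπ0 : ∀ s a, 0 ≤ π s a) (hπ1 : ∀ s, ∑ a : V, π s a = 1)
    (hrb0 : 0 < rb) (hrb1 : rb ≤ 1)
    (s : List V) (hreach : Reach e π [] s) (hnt : e ∉ s) (hlen : s.length < T) :
    Vval e r π (T - s.length) s < Aval e r π rb (T - s.length) s ↔
      ∃ s', Reach e π s s' ∧ e ∉ s' ∧ s'.length < T ∧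
        Vval e r π (T - s'.length) s' < rb := by
  have hT : s.length + (T - s.length) = T := by omega
  constructor
  · intro hlt
    by_contra hno
    push_neg at hno
    have heq : Aval e r π rb (T - s.length) s = Vval e r π (T - s.length) s := by
      apply aval_eq_vval e r π rb hπ0
      intro s' hr hs' hl
      rw [hT] at hl ⊢
      exact hno s' hr hs' hl
    rw [heq] at hlt
    exact lt_irrefl _ hlt
  · rintro ⟨s', hr, hs', hl, hv⟩
    apply strict_aux e r π rb hπ0 _ _ hnt
    refine ⟨s', hr, hs', ?_, ?_⟩
    · omega
    · rwa [hT]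
end

section
/- The expected objective satisfies J(a(π)) ≥ J(π) and J(a(π)) ≥ r⊥, where J(ρ,π') = E_{x∼ρ}[V((x, empty); π')]. Moreover J(a(π)) > J(π) if and only if some reachable non-terminal state s satisfies V(s;π) < r⊥. -/
/-!
At each state `a(π)` either follows `π` or abstains, and it abstains only where the value of `π`
is below `r⊥`; by induction on the horizon, `V(s;π) ≤ V(s;a(π))` everywhere and
`V(s;a(π)) ≥ r⊥` at non-terminal states. The gap at `s` is positive exactly when `a(π)`
abstains somewhere along a positive-probability path from `s`, i.e. when some state reachable
from `s` has value below `r⊥`; averaging over prompts of positive mass gives the criterion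
for `J`.
-/

open Finset

attribute [local instance] Classical.propDecidable

variable {V : Type*}

theorem Finset.sum_lt_sum_iff_of_le {ι M : Type*} [AddCommMonoid M] [LinearOrder M]
    [IsOrderedCancelAddMonoid M] {s : Finset ι} {f g : ι → M} (hfg : ∀ i ∈ s, f i ≤ g i) :
    ∑ i ∈ s, f i < ∑ i ∈ s, g i ↔ ∃ i ∈ s, f i < g i := by
  refine ⟨fun hlt => ?_, fun ⟨i, hi, hlt⟩ => Finset.sum_lt_sum hfg ⟨i, hi, hlt⟩⟩
  by_contra! hge
  exact (Finset.sum_le_sum hge).not_gt hlt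

theorem mul_lt_mul_iff_of_nonneg_left {R : Type*} [Semiring R] [PartialOrder R]
    [PosMulStrictMono R] [PosMulReflectLT R] {c a b : R} (hc : 0 ≤ c) :
    c * a < c * b ↔ 0 < c ∧ a < b := by
  refine ⟨fun h => ⟨hc.lt_of_ne ?_, lt_of_mul_lt_mul_left h hc⟩,
    fun h => mul_lt_mul_of_pos_left h.2 h.1⟩
  rintro rfl
  simp at h

theorem Finset.sum_mul_lt_sum_mul_iff {ι R : Type*} [Semiring R] [LinearOrder R]
    [IsStrictOrderedRing R] {s : Finset ι} {w f g : ι → R} (hw : ∀ i ∈ s, 0 ≤ w i)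
    (hfg : ∀ i ∈ s, f i ≤ g i) :
    ∑ i ∈ s, w i * f i < ∑ i ∈ s, w i * g i ↔ ∃ i ∈ s, 0 < w i ∧ f i < g i := by
  rw [Finset.sum_lt_sum_iff_of_le fun i hi => mul_le_mul_of_nonneg_left (hfg i hi) (hw i hi)]
  exact exists_congr fun i => and_congr_right fun hi => mul_lt_mul_iff_of_nonneg_left (hw i hi)

theorem Reach.isPrefix {e : V} {π : List V → V → ℝ} {s s' : List V} (h : Reach e π s s') :
    s <+: s' := by
  induction h with
  | refl => exact List.prefix_refl s
  | tail _ step ih =>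
    obtain ⟨_, a, _, rfl⟩ := step
    exact ih.trans (List.prefix_append _ _)

section Values

variable [Fintype V] (e : V) (r : List V → ℝ) (π : List V → V → ℝ) (rb : ℝ)

theorem Aval_succ_of_Vval_lt {n : ℕ} {s : List V} (hs : e ∉ s)
    (hlt : Vval e r π (n + 1) s < rb) :
    Aval e r π rb (n + 1) s = rb := by
  rw [Aval, if_neg hs, if_pos hlt]

theorem Aval_succ_of_not_Vval_lt {n : ℕ} {s : List V} (hs : e ∉ s)
    (hle : ¬ Vval e r π (n + 1) s < rb) :
    Aval e r π rb (n + 1) s =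
      ∑ a, π s a * (if a = e then r (s ++ [a]) else Aval e r π rb n (s ++ [a])) := by
  rw [Aval, if_neg hs, if_neg hle]

theorem Vval_succ_of_not_mem {n : ℕ} {s : List V} (hs : e ∉ s) :
    Vval e r π (n + 1) s =
      ∑ a, π s a * (if a = e then r (s ++ [a]) else Vval e r π n (s ++ [a])) := by
  rw [Vval, if_neg hs]

variable {π}

theorem Vval_le_Aval (hπ : ∀ s a, 0 ≤ π s a) (n : ℕ) (s : List V) :
    Vval e r π n s ≤ Aval e r π rb n s := by
  induction n generalizing s with
  | zero => simp [Vval, Aval]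
  | succ n ih =>
    by_cases hs : e ∈ s
    · simp [Vval, Aval, hs]
    by_cases hlt : Vval e r π (n + 1) s < rb
    · rw [Aval_succ_of_Vval_lt e r π rb hs hlt]
      exact hlt.le
    rw [Aval_succ_of_not_Vval_lt e r π rb hs hlt, Vval_succ_of_not_mem e r π hs]
    gcongr with a
    · exact hπ s a
    · split_ifs
      exacts [le_rfl, ih _]

theorem rb_le_Aval (hπ : ∀ s a, 0 ≤ π s a) {n : ℕ} {s : List V} (hs : e ∉ s) :
    rb ≤ Aval e r π rb (n + 1) s := by
  by_cases hlt : Vval e r π (n + 1) s < rb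
  · exact (Aval_succ_of_Vval_lt e r π rb hs hlt).ge
  · exact (not_lt.mp hlt).trans (Vval_le_Aval e r rb hπ _ _)

/-- The horizon `s.length + n` is the absolute one: a state `s'` reachable from `s` has
`s.length + n - s'.length` steps left. -/
theorem Vval_lt_Aval_iff (hπ : ∀ s a, 0 ≤ π s a) (n : ℕ) {s : List V} (hs : e ∉ s) :
    Vval e r π n s < Aval e r π rb n s ↔
      ∃ s', Reach e π s s' ∧ e ∉ s' ∧ s'.length < s.length + n ∧
        Vval e r π (s.length + n - s'.length) s' < rb := by
  induction n generalizing s with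
  | zero =>
    simp only [Vval, Aval, lt_irrefl, add_zero, false_iff, not_exists, not_and]
    exact fun s' hreach _ hlt => absurd hreach.isPrefix.length_le (not_le.mpr hlt)
  | succ n ih =>
    by_cases hlt : Vval e r π (n + 1) s < rb
    · rw [Aval_succ_of_Vval_lt e r π rb hs hlt]
      exact iff_of_true hlt ⟨s, .refl, hs, by omega, by simpa using hlt⟩
    have hterm (a : V) : (if a = e then r (s ++ [a]) else Vval e r π n (s ++ [a])) <
        (if a = e then r (s ++ [a]) else Aval e r π rb n (s ++ [a])) ↔
        a ≠ e ∧ Vval e r π n (s ++ [a]) < Aval e r π rb n (s ++ [a]) := by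
      split_ifs with ha <;> simp [ha]
    rw [Aval_succ_of_not_Vval_lt e r π rb hs hlt, Vval_succ_of_not_mem e r π hs,
      Finset.sum_mul_lt_sum_mul_iff (fun a _ => hπ s a)
        (fun a _ => by split_ifs; exacts [le_rfl, Vval_le_Aval e r rb hπ _ _])]
    simp only [Finset.mem_univ, true_and, hterm]
    constructor
    · rintro ⟨a, hπa, hae, hgap⟩
      have hsa : e ∉ s ++ [a] := by simp [hs, Ne.symm hae]
      obtain ⟨s', hreach, hs', hlen, hval⟩ := (ih hsa).mp hgap
      simp only [List.length_append, List.length_singleton] at hlen hval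
      exact ⟨s', .head ⟨hs, a, hπa, rfl⟩ hreach, hs', by omega,
        by rwa [← add_assoc, add_right_comm]⟩
    · rintro ⟨s', hreach, hs', hlen, hval⟩
      rcases Relation.ReflTransGen.cases_head_iff.mp hreach with
        rfl | ⟨_, ⟨-, a, hπa, rfl⟩, hreach⟩
      · exact absurd (by simpa using hval) hlt
      have hsa : e ∉ s ++ [a] := fun he => hs' ((Reach.isPrefix hreach).subset he)
      have hae : a ≠ e := by rintro rfl; simp at hsa
      refine ⟨a, hπa, hae, (ih hsa).mpr ⟨s', hreach, hs', ?_, ?_⟩⟩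
      · simp only [List.length_append, List.length_singleton]; omega
      · simpa only [List.length_append, List.length_singleton, add_right_comm, ← add_assoc]
          using hval

end Values

theorem dominance_over_no_abstention_general [Fintype V] {X : Type*} [Fintype X]
    (e : V) (ρ : X → ℝ) (r : X → List V → ℝ)
    (π : X → List V → V → ℝ) (rb : ℝ) (T : ℕ)
    (hρ0 : ∀ x, 0 ≤ ρ x) (hρ1 : ∑ x, ρ x = 1)
    (hπ0 : ∀ x s a, 0 ≤ π x s a) (hT : 1 ≤ T) :
    (∑ x, ρ x * Vval e (r x) (π x) T []) ≤ (∑ x, ρ x * Aval e (r x) (π x) rb T []) ∧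
    rb ≤ (∑ x, ρ x * Aval e (r x) (π x) rb T []) ∧
    ((∑ x, ρ x * Vval e (r x) (π x) T []) < (∑ x, ρ x * Aval e (r x) (π x) rb T []) ↔
      ∃ x s, 0 < ρ x ∧ Reach e (π x) [] s ∧ e ∉ s ∧ s.length < T ∧
        Vval e (r x) (π x) (T - s.length) s < rb) := by
  have hle (x : X) : Vval e (r x) (π x) T [] ≤ Aval e (r x) (π x) rb T [] :=
    Vval_le_Aval e (r x) rb (hπ0 x) T []
  refine ⟨Finset.sum_le_sum fun x _ => mul_le_mul_of_nonneg_left (hle x) (hρ0 x), ?_, ?_⟩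
  · obtain ⟨n, rfl⟩ : ∃ n, T = n + 1 := ⟨T - 1, by omega⟩
    calc rb = ∑ x, ρ x * rb := by rw [← Finset.sum_mul, hρ1, one_mul]
      _ ≤ ∑ x, ρ x * Aval e (r x) (π x) rb (n + 1) [] := by
        gcongr with x
        · exact hρ0 x
        · exact rb_le_Aval e (r x) rb (hπ0 x) List.not_mem_nil
  · rw [Finset.sum_mul_lt_sum_mul_iff (fun x _ => hρ0 x) (fun x _ => hle x)]
    simp only [Finset.mem_univ, true_and, exists_and_left]
    refine exists_congr fun x => and_congr_right fun _ => ?_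
    simp only [Vval_lt_Aval_iff e (r x) rb (hπ0 x) T List.not_mem_nil, List.length_nil, zero_add]

/-- Dominance over no abstention (Proposition 4.2): `J(a(π)) ≥ J(π)` and
`J(a(π)) ≥ r⊥`, with strict improvement iff some reachable non-terminal
state has value below `r⊥`.  Here `J(π') = E_{x∼ρ}[V((x, ∅); π')]`. -/
theorem dominance_over_no_abstention [Fintype V] {X : Type*} [Fintype X]
    (e : V) (ρ : X → ℝ) (r : X → List V → ℝ)
    (π : X → List V → V → ℝ) (rb : ℝ) (T : ℕ)
    (hρ0 : ∀ x, 0 ≤ ρ x) (hρ1 : ∑ x, ρ x = 1)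
    (hπ0 : ∀ x s a, 0 ≤ π x s a) (hπ1 : ∀ x s, ∑ a : V, π x s a = 1)
    (hr : ∀ x y, r x y ∈ Set.Icc (0:ℝ) 1)
    (hrb0 : 0 < rb) (hrb1 : rb ≤ 1) (hT : 1 ≤ T) :
    (∑ x, ρ x * Vval e (r x) (π x) T []) ≤ (∑ x, ρ x * Aval e (r x) (π x) rb T []) ∧
    rb ≤ (∑ x, ρ x * Aval e (r x) (π x) rb T []) ∧
    ((∑ x, ρ x * Vval e (r x) (π x) T []) < (∑ x, ρ x * Aval e (r x) (π x) rb T []) ↔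
      ∃ x s, 0 < ρ x ∧ Reach e (π x) [] s ∧ e ∉ s ∧ s.length < T ∧
        Vval e (r x) (π x) (T - s.length) s < rb) :=
  dominance_over_no_abstention_general e ρ r π rb T hρ0 hρ1 hπ0 hT
end
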